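/- Fix T ∈ ℕ, σ > 0, ρ ∈ [0, 1] and t ∈ (0, 1]. Let X₁, …, X_T and Z₁, …, Z_T be centered square-integrable real random variables on a common probability space with E[X_i X_j] = ρ^{|i−j|} σ² for all i, j, with E[Z_j X_i] = 0 for all i, j, and E[Z_j Z_k] = 0 for j ≠ k. Define reconstructions by X̂₁ := √t · X₁ + Z₁ and, for 2 ≤ j ≤ T, X̂_j := ρ · X̂_{j−1} + √((1 − ρ²) t) · X_j + Z_j. Then for every 1 ≤ j ≤ T, E[X_j X̂_j] = Δ_{JD,j} · √t · σ², where Δ_{JD,j} := ρ^{2(j−1)} + √(1 − ρ²) · Σ_{i=0}^{j−2} ρ^{2i} (the sum being empty for j = 1). Consequently, if in addition E[X̂_j²] = σ², then E[(X_j − X̂_j)²] = 2(1 − Δ_{JD,j} √t) σ². In particular for ρ = 1 one has Δ_{JD,j} = 1 for every j, so the distortion does not improve with j — the permanence-of-error phenomenon under the joint-distribution perception loss. -/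

import Mathlib

open MeasureTheory

/-!
The noises are orthogonal to the whole source, so for `m ≥ j` the cross moment `E[X_m X̂_j]`
only sees the source part of `X̂_j`. Unrolling the recursion together with
`E[X_m X_{j+1}] = ρ^{m-j-1} σ²` shows that `E[X_m X̂_j] = ρ^{m-j} · Δ_j · √t · σ²`, where the
frame gain obeys `Δ_1 = 1` and `Δ_{j+1} = ρ² Δ_j + √(1 - ρ²)`; this recursion is solved by
`ΔJD`. The distortion follows by expanding `E[(X_j - X̂_j)²]`.
-/

/-- The correlation gain `Δ_{JD,j} = ρ^{2(j−1)} + √(1 − ρ²)·Σ_{i=0}^{j−2} ρ^{2i}` of the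
zero joint-distribution perception loss decoder at frame `j`. -/
noncomputable def ΔJD (ρ : ℝ) (j : ℕ) : ℝ :=
  ρ ^ (2 * (j - 1)) + Real.sqrt (1 - ρ ^ 2) * ∑ i ∈ Finset.range (j - 1), ρ ^ (2 * i)

theorem ΔJD_one (ρ : ℝ) : ΔJD ρ 1 = 1 := by
  simp [ΔJD]

theorem ΔJD_succ (ρ : ℝ) {j : ℕ} (hj : 1 ≤ j) :
    ΔJD ρ (j + 1) = ρ ^ 2 * ΔJD ρ j + Real.sqrt (1 - ρ ^ 2) := by
  obtain ⟨k, rfl⟩ : ∃ k, j = k + 1 := ⟨j - 1, by omega⟩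
  simp only [ΔJD, Nat.add_sub_cancel, pow_mul, Finset.sum_range_succ', pow_succ, ← Finset.sum_mul]
  ring

section SecondMoments

variable {Ω : Type*} [MeasurableSpace Ω] {P : Measure Ω} {f g h : Ω → ℝ}

theorem integral_mul_add_of_memLp (hf : MemLp f 2 P) (hg : MemLp g 2 P) (hh : MemLp h 2 P) :
    ∫ ω, f ω * (g ω + h ω) ∂P = ∫ ω, f ω * g ω ∂P + ∫ ω, f ω * h ω ∂P := by
  simp_rw [mul_add]
  exact integral_add (hf.integrable_mul hg) (hf.integrable_mul hh)

theorem integral_mul_const_mul (a : ℝ) :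
    ∫ ω, f ω * (a * g ω) ∂P = a * ∫ ω, f ω * g ω ∂P := by
  simp_rw [mul_left_comm (f _)]
  exact integral_const_mul a _

theorem integral_sub_sq_of_memLp (hf : MemLp f 2 P) (hg : MemLp g 2 P) :
    ∫ ω, (f ω - g ω) ^ 2 ∂P
      = ∫ ω, f ω ^ 2 ∂P - 2 * ∫ ω, f ω * g ω ∂P + ∫ ω, g ω ^ 2 ∂P := by
  have hfg : Integrable (fun ω => 2 * (f ω * g ω)) P := (hf.integrable_mul hg).const_mul 2
  have hf2fg : Integrable (fun ω => f ω ^ 2 - 2 * (f ω * g ω)) P := hf.integrable_sq.sub hfg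
  simp_rw [sub_sq, mul_assoc]
  rw [integral_add hf2fg hg.integrable_sq,
    integral_sub hf.integrable_sq hfg, integral_const_mul]

end SecondMoments

section Decoder

variable {Ω : Type*} [MeasurableSpace Ω] {P : Measure Ω} {T : ℕ} {σ ρ t : ℝ}
  {X Z Xhat : ℕ → Ω → ℝ}

theorem memLp_Xhat (hXmem : ∀ j, 1 ≤ j → j ≤ T → MemLp (X j) 2 P)
    (hZmem : ∀ j, 1 ≤ j → j ≤ T → MemLp (Z j) 2 P)
    (hXhat1 : Xhat 1 = fun ω => Real.sqrt t * X 1 ω + Z 1 ω)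
    (hXhatrec : ∀ j, 2 ≤ j → j ≤ T → Xhat j = fun ω =>
      ρ * Xhat (j - 1) ω + Real.sqrt ((1 - ρ ^ 2) * t) * X j ω + Z j ω) :
    ∀ j, 1 ≤ j → j ≤ T → MemLp (Xhat j) 2 P := by
  intro j hj
  induction j, hj using Nat.le_induction with
  | base =>
    intro h1T
    rw [hXhat1]
    exact ((hXmem 1 le_rfl h1T).const_mul _).add (hZmem 1 le_rfl h1T)
  | succ j hj ih =>
    intro hjT
    rw [hXhatrec (j + 1) (by omega) hjT, Nat.add_sub_cancel]
    exact (((ih (by omega)).const_mul ρ).add ((hXmem (j + 1) (by omega) hjT).const_mul _)).add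
      (hZmem (j + 1) (by omega) hjT)

theorem integral_X_mul_Xhat (ht : 0 ≤ t)
    (hXmem : ∀ j, 1 ≤ j → j ≤ T → MemLp (X j) 2 P)
    (hZmem : ∀ j, 1 ≤ j → j ≤ T → MemLp (Z j) 2 P)
    (hXX : ∀ i j, 1 ≤ i → i ≤ T → 1 ≤ j → j ≤ T →
      ∫ ω, X i ω * X j ω ∂P = ρ ^ ((i : ℤ) - (j : ℤ)).natAbs * σ ^ 2)
    (hZX : ∀ i j, 1 ≤ i → i ≤ T → 1 ≤ j → j ≤ T → ∫ ω, Z j ω * X i ω ∂P = 0)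
    (hXhat1 : Xhat 1 = fun ω => Real.sqrt t * X 1 ω + Z 1 ω)
    (hXhatrec : ∀ j, 2 ≤ j → j ≤ T → Xhat j = fun ω =>
      ρ * Xhat (j - 1) ω + Real.sqrt ((1 - ρ ^ 2) * t) * X j ω + Z j ω) :
    ∀ j, 1 ≤ j → j ≤ T → ∀ m, j ≤ m → m ≤ T →
      ∫ ω, X m ω * Xhat j ω ∂P = ρ ^ (m - j) * (ΔJD ρ j * Real.sqrt t * σ ^ 2) := by
  have hXX_of_le : ∀ i m, 1 ≤ i → i ≤ m → m ≤ T →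
      ∫ ω, X m ω * X i ω ∂P = ρ ^ (m - i) * σ ^ 2 := fun i m hi him hmT => by
    rw [hXX m i (by omega) hmT hi (by omega)]
    congr 2
    omega
  have hXZ : ∀ i m, 1 ≤ i → i ≤ T → 1 ≤ m → m ≤ T → ∫ ω, X m ω * Z i ω ∂P = 0 :=
    fun i m hi hiT hm hmT => by
      simp_rw [mul_comm (X m _)]
      exact hZX m i hm hmT hi hiT
  intro j hj
  induction j, hj using Nat.le_induction with
  | base =>
    intro h1T m hm hmT
    have hXm := hXmem m hm hmT
    rw [hXhat1, integral_mul_add_of_memLp hXm ((hXmem 1 le_rfl h1T).const_mul _)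
      (hZmem 1 le_rfl h1T), integral_mul_const_mul, hXX_of_le 1 m le_rfl hm hmT,
      hXZ 1 m le_rfl h1T hm hmT, ΔJD_one]
    ring
  | succ j hj ih =>
    intro hjT m hm hmT
    have hXm := hXmem m (by omega) hmT
    have hXj := hXmem (j + 1) (by omega) hjT
    have hXhatj := memLp_Xhat hXmem hZmem hXhat1 hXhatrec j hj (by omega)
    have hsource : MemLp (fun ω => ρ * Xhat j ω + Real.sqrt ((1 - ρ ^ 2) * t) * X (j + 1) ω)
        2 P := (hXhatj.const_mul ρ).add (hXj.const_mul _)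
    simp only [hXhatrec (j + 1) (by omega) hjT, Nat.add_sub_cancel]
    rw [integral_mul_add_of_memLp hXm hsource (hZmem (j + 1) (by omega) hjT),
      integral_mul_add_of_memLp hXm (hXhatj.const_mul ρ) (hXj.const_mul _),
      integral_mul_const_mul, integral_mul_const_mul, ih (by omega) m (by omega) hmT,
      hXX_of_le (j + 1) m (by omega) hm hmT, hXZ (j + 1) m (by omega) hjT (by omega) hmT,
      ΔJD_succ ρ hj, Real.sqrt_mul' _ ht,
      show m - j = m - (j + 1) + 1 by omega, pow_succ]
    ring

end Decoder

theorem statement13 {Ω : Type*} [MeasurableSpace Ω] (P : Measure Ω)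
    (T : ℕ) (σ ρ t : ℝ) (ht : t ∈ Set.Ioc (0 : ℝ) 1)
    (X Z Xhat : ℕ → Ω → ℝ)
    (hXmem : ∀ j, 1 ≤ j → j ≤ T → MemLp (X j) 2 P)
    (hZmem : ∀ j, 1 ≤ j → j ≤ T → MemLp (Z j) 2 P)
    (hXX : ∀ i j, 1 ≤ i → i ≤ T → 1 ≤ j → j ≤ T →
      ∫ ω, X i ω * X j ω ∂P = ρ ^ ((i : ℤ) - (j : ℤ)).natAbs * σ ^ 2)
    (hZX : ∀ i j, 1 ≤ i → i ≤ T → 1 ≤ j → j ≤ T → ∫ ω, Z j ω * X i ω ∂P = 0)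
    (hXhat1 : Xhat 1 = fun ω => Real.sqrt t * X 1 ω + Z 1 ω)
    (hXhatrec : ∀ j, 2 ≤ j → j ≤ T → Xhat j = fun ω =>
      ρ * Xhat (j - 1) ω + Real.sqrt ((1 - ρ ^ 2) * t) * X j ω + Z j ω) :
    ∀ j, 1 ≤ j → j ≤ T →
      (∫ ω, X j ω * Xhat j ω ∂P = ΔJD ρ j * Real.sqrt t * σ ^ 2) ∧
      ((∫ ω, Xhat j ω ^ 2 ∂P = σ ^ 2) →
        ∫ ω, (X j ω - Xhat j ω) ^ 2 ∂P = 2 * (1 - ΔJD ρ j * Real.sqrt t) * σ ^ 2) := by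
  intro j hj hjT
  have hcorr : ∫ ω, X j ω * Xhat j ω ∂P = ΔJD ρ j * Real.sqrt t * σ ^ 2 := by
    simpa using integral_X_mul_Xhat ht.1.le hXmem hZmem hXX hZX hXhat1 hXhatrec
      j hj hjT j le_rfl hjT
  refine ⟨hcorr, fun hvar => ?_⟩
  have hXsq : ∫ ω, X j ω ^ 2 ∂P = σ ^ 2 := by
    simpa [sq] using hXX j j hj hjT hj hjT
  rw [integral_sub_sq_of_memLp (hXmem j hj hjT)
    (memLp_Xhat hXmem hZmem hXhat1 hXhatrec j hj hjT), hXsq, hcorr, hvar]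
  ring
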